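/- Let g = l ⊕ m be a reductive decomposition ([l,m] ⊆ m) and G = (g, [,], ϖ, φ) a Lie quasi-bialgebra canonically compatible with it (ϖ_l = 0, ⟨m^⊥, ϖ_• m^⊥⟩ = 0, φ ∈ Alt(l⊗l⊗l ⊕ l⊗m⊗m ⊕ m⊗m⊗m), φ ≡ 0 mod l), with double d = g ⊕ g*. Denote by s = (p_l)* : l* → g* the dual of the projection p_l : g → l along m. Then for all p ∈ l* and all n ∈ ℕ: ad^{2n}_{sp}(m^⊥) ⊆ m^⊥, ad^{2n}_{sp}(l) ⊆ l, ad^{2n+1}_{sp}(m^⊥) ⊆ l, ad^{2n+1}_{sp}(s(l*)) ⊆ m^⊥, and ad^n_{sp}(m ⊕ l^⊥) ⊆ m ⊕ l^⊥, where ad is the adjoint action of the double d. -/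

import Mathlib

/-!
The element `σ = s p` annihilates `m`. For such `σ` the compatibility conditions make `ad_σ`
map `m^⊥` into `l`, `l` into `m^⊥`, and `m ⊕ l^⊥` into itself; the even and odd powers of
`ad_σ` are then read off by composing these mapping properties.
-/

section

/-- The bracket of the canonical double `d = g ⊕ g*` of a Lie quasi-bialgebra
`(g, [,], ϖ, φ)`, where `c ξ η = ⟨ξ⊗η⊗1, φ⟩`. -/
def brD {K L : Type*} [Field K] [LieRing L] [LieAlgebra K L]
    (ϖ : L →ₗ[K] Module.Dual K L →ₗ[K] L)
    (c : Module.Dual K L →ₗ[K] Module.Dual K L →ₗ[K] L) :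
    L × Module.Dual K L → L × Module.Dual K L → L × Module.Dual K L :=
  fun X Y =>
    (⁅X.1, Y.1⁆ + ϖ X.1 Y.2 - ϖ Y.1 X.2 + c X.2 Y.2,
      - Y.2 ∘ₗ LieAlgebra.ad K L X.1 + X.2 ∘ₗ LieAlgebra.ad K L Y.1
        + Y.2 ∘ₗ ϖ.flip X.2)

open Set

theorem Set.MapsTo.iterate_two_mul {α : Type*} {f : α → α} {s t : Set α}
    (hst : MapsTo f s t) (hts : MapsTo f t s) (n : ℕ) : MapsTo f^[2 * n] s s := by
  rw [Function.iterate_mul]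
  exact (hts.comp hst).iterate n

theorem Set.MapsTo.iterate_two_mul_add_one {α : Type*} {f : α → α} {s t : Set α}
    (hst : MapsTo f s t) (hts : MapsTo f t s) (n : ℕ) : MapsTo f^[2 * n + 1] s t := by
  rw [Function.iterate_succ]
  exact (hts.iterate_two_mul hst n).comp hst

theorem Submodule.comp_projectionOnto_mem_dualAnnihilator {R M : Type*} [CommRing R]
    [AddCommGroup M] [Module R M] {p q : Submodule R M} (h : IsCompl p q)
    (f : Module.Dual R p) : f ∘ₗ p.projectionOnto q h ∈ q.dualAnnihilator := by
  rw [Submodule.mem_dualAnnihilator]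
  intro u hu
  simp [Submodule.projectionOnto_apply_of_mem_right h hu]

section Double

variable {K L : Type*} [Field K] [LieRing L] [LieAlgebra K L]
  {ϖ : L →ₗ[K] Module.Dual K L →ₗ[K] L} {c : Module.Dual K L →ₗ[K] Module.Dual K L →ₗ[K] L}
  {l m : Submodule K L} {σ : Module.Dual K L}

theorem brD_zero_left (ϖ : L →ₗ[K] Module.Dual K L →ₗ[K] L)
    (c : Module.Dual K L →ₗ[K] Module.Dual K L →ₗ[K] L) (σ : Module.Dual K L)
    (Y : L × Module.Dual K L) :
    brD ϖ c (0, σ) Y = (c σ Y.2 - ϖ Y.1 σ, σ ∘ₗ LieAlgebra.ad K L Y.1 + Y.2 ∘ₗ ϖ.flip σ) := by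
  simp [brD, neg_add_eq_sub]

theorem mapsTo_brD_zero_prod_dualAnnihilator
    (hϖm : ∀ (x : L), ∀ ξ ∈ m.dualAnnihilator, ∀ η ∈ m.dualAnnihilator, ξ (ϖ x η) = 0)
    (hAlt1 : ∀ ξ ∈ m.dualAnnihilator, ∀ η ∈ m.dualAnnihilator,
      ∀ ζ ∈ l.dualAnnihilator, ζ (c ξ η) = 0)
    (hσ : σ ∈ m.dualAnnihilator) :
    MapsTo (brD ϖ c (0, σ)) ({0} ×ˢ (m.dualAnnihilator : Set _)) ((l : Set L) ×ˢ {0}) := by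
  rintro ⟨_, ξ⟩ ⟨rfl, hξ⟩
  rw [brD_zero_left]
  refine ⟨?_, ?_⟩
  · simpa using (Subspace.forall_mem_dualAnnihilator_apply_eq_zero_iff l _).mp
      (hAlt1 σ hσ ξ hξ)
  · simpa [LinearMap.ext_iff] using fun x => hϖm x ξ hξ σ hσ

theorem mapsTo_brD_prod_zero
    (hred : ∀ x ∈ l, ∀ u ∈ m, ⁅x, u⁆ ∈ m) (hϖl : ∀ z ∈ l, ϖ z = 0)
    (hσ : σ ∈ m.dualAnnihilator) :
    MapsTo (brD ϖ c (0, σ)) ((l : Set L) ×ˢ {0}) ({0} ×ˢ (m.dualAnnihilator : Set _)) := by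
  rintro ⟨z, _⟩ ⟨hz, rfl⟩
  rw [brD_zero_left]
  refine ⟨by simp [hϖl z hz], ?_⟩
  rw [Submodule.mem_dualAnnihilator] at hσ
  rw [SetLike.mem_coe, Submodule.mem_dualAnnihilator]
  intro u hu
  simpa using hσ _ (hred z hz u hu)

theorem mapsTo_brD_prod_dualAnnihilator
    (hred : ∀ x ∈ l, ∀ u ∈ m, ⁅x, u⁆ ∈ m) (hϖl : ∀ z ∈ l, ϖ z = 0)
    (hϖm : ∀ (x : L), ∀ ξ ∈ m.dualAnnihilator, ∀ η ∈ m.dualAnnihilator, ξ (ϖ x η) = 0)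
    (hAlt2 : ∀ ξ ∈ m.dualAnnihilator, ∀ η ∈ l.dualAnnihilator,
      ∀ ζ ∈ m.dualAnnihilator, ζ (c ξ η) = 0)
    (hσ : σ ∈ m.dualAnnihilator) :
    MapsTo (brD ϖ c (0, σ)) ((m : Set L) ×ˢ (l.dualAnnihilator : Set _))
      ((m : Set L) ×ˢ (l.dualAnnihilator : Set _)) := by
  rintro ⟨u, ξ⟩ ⟨hu, hξ⟩
  rw [brD_zero_left]
  refine ⟨m.sub_mem ?_ ?_, ?_⟩
  · exact (Subspace.forall_mem_dualAnnihilator_apply_eq_zero_iff m _).mp (hAlt2 σ hσ ξ hξ)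
  · exact (Subspace.forall_mem_dualAnnihilator_apply_eq_zero_iff m _).mp
      fun η hη => hϖm u η hη σ hσ
  · rw [Submodule.mem_dualAnnihilator] at hσ
    rw [SetLike.mem_coe, Submodule.mem_dualAnnihilator]
    intro z hz
    have hσuz : σ ⁅u, z⁆ = 0 := by
      rw [← lie_skew, map_neg, hσ _ (hred z hz u hu), neg_zero]
    simp [hσuz, hϖl z hz]

end Double

theorem stmt_17_general {K L : Type*} [Field K] [LieRing L] [LieAlgebra K L]
    (l m : Submodule K L) (hc : IsCompl l m)
    (hred : ∀ x ∈ l, ∀ u ∈ m, ⁅x, u⁆ ∈ m)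
    (ϖ : L →ₗ[K] Module.Dual K L →ₗ[K] L)
    (c : Module.Dual K L →ₗ[K] Module.Dual K L →ₗ[K] L)
    -- canonical compatibility of `G` with the reductive decomposition:
    (hϖl : ∀ z ∈ l, ϖ z = 0)
    (hϖm : ∀ (x : L), ∀ ξ ∈ m.dualAnnihilator, ∀ η ∈ m.dualAnnihilator, ξ (ϖ x η) = 0)
    -- `φ ∈ Alt(l⊗l⊗l ⊕ l⊗m⊗m ⊕ m⊗m⊗m)`:
    (hAlt1 : ∀ ξ ∈ m.dualAnnihilator, ∀ η ∈ m.dualAnnihilator,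
      ∀ ζ ∈ l.dualAnnihilator, ζ (c ξ η) = 0)
    (hAlt2 : ∀ ξ ∈ m.dualAnnihilator, ∀ η ∈ l.dualAnnihilator,
      ∀ ζ ∈ m.dualAnnihilator, ζ (c ξ η) = 0)
    (p : Module.Dual K ↥l) :
    (∀ (n : ℕ), ∀ ξ ∈ m.dualAnnihilator,
        ((fun Y => brD ϖ c (0, p ∘ₗ Submodule.linearProjOfIsCompl l m hc) Y)^[2 * n]
            (0, ξ)).1 = 0
          ∧ ((fun Y => brD ϖ c (0, p ∘ₗ Submodule.linearProjOfIsCompl l m hc) Y)^[2 * n]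
              (0, ξ)).2 ∈ m.dualAnnihilator)
      ∧ (∀ (n : ℕ), ∀ z ∈ l,
          ((fun Y => brD ϖ c (0, p ∘ₗ Submodule.linearProjOfIsCompl l m hc) Y)^[2 * n]
              (z, 0)).1 ∈ l
            ∧ ((fun Y => brD ϖ c (0, p ∘ₗ Submodule.linearProjOfIsCompl l m hc) Y)^[2 * n]
                (z, 0)).2 = 0)
      ∧ (∀ (n : ℕ), ∀ ξ ∈ m.dualAnnihilator,
          ((fun Y => brD ϖ c (0, p ∘ₗ Submodule.linearProjOfIsCompl l m hc) Y)^[2 * n + 1]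
              (0, ξ)).1 ∈ l
            ∧ ((fun Y => brD ϖ c (0, p ∘ₗ Submodule.linearProjOfIsCompl l m hc) Y)^[2 * n + 1]
                (0, ξ)).2 = 0)
      ∧ (∀ (n : ℕ), ∀ z ∈ l,
          ((fun Y => brD ϖ c (0, p ∘ₗ Submodule.linearProjOfIsCompl l m hc) Y)^[2 * n + 1]
              (z, 0)).1 = 0
            ∧ ((fun Y => brD ϖ c (0, p ∘ₗ Submodule.linearProjOfIsCompl l m hc) Y)^[2 * n + 1]
                (z, 0)).2 ∈ m.dualAnnihilator)
      ∧ (∀ (n : ℕ), ∀ u ∈ m, ∀ ξ ∈ l.dualAnnihilator,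
          ((fun Y => brD ϖ c (0, p ∘ₗ Submodule.linearProjOfIsCompl l m hc) Y)^[n]
              (u, ξ)).1 ∈ m
            ∧ ((fun Y => brD ϖ c (0, p ∘ₗ Submodule.linearProjOfIsCompl l m hc) Y)^[n]
                (u, ξ)).2 ∈ l.dualAnnihilator) := by
  have hσ := Submodule.comp_projectionOnto_mem_dualAnnihilator hc p
  have hA := mapsTo_brD_zero_prod_dualAnnihilator hϖm hAlt1 hσ
  have hB := mapsTo_brD_prod_zero (c := c) hred hϖl hσ
  have hC := mapsTo_brD_prod_dualAnnihilator hred hϖl hϖm hAlt2 hσ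
  refine ⟨fun n ξ hξ => ?_, fun n z hz => ?_, fun n ξ hξ => ?_, fun n z hz => ?_,
    fun n u hu ξ hξ => hC.iterate n ⟨hu, hξ⟩⟩
  · exact hA.iterate_two_mul hB n (mk_mem_prod (mem_singleton 0) hξ)
  · exact hB.iterate_two_mul hA n (mk_mem_prod hz (mem_singleton 0))
  · exact hA.iterate_two_mul_add_one hB n (mk_mem_prod (mem_singleton 0) hξ)
  · exact hB.iterate_two_mul_add_one hA n (mk_mem_prod hz (mem_singleton 0))

/-- For a Lie quasi-bialgebra `G` canonically compatible with a reductive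
decomposition `g = l ⊕ m`, the powers of `ad_{sp}` (adjoint action of the double,
`p ∈ l*`, `s` the dual of the projection onto `l`) satisfy:
`ad^{2n}(m^⊥) ⊆ m^⊥`, `ad^{2n}(l) ⊆ l`, `ad^{2n+1}(m^⊥) ⊆ l`, `ad^{2n+1}(l) ⊆ m^⊥`,
and `ad^n(m ⊕ l^⊥) ⊆ m ⊕ l^⊥`. -/
theorem stmt_17 {K L : Type*} [Field K] [LieRing L] [LieAlgebra K L]
    [FiniteDimensional K L]
    (l m : Submodule K L) (hc : IsCompl l m)
    (hsub : ∀ x ∈ l, ∀ y ∈ l, ⁅x, y⁆ ∈ l)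
    (hred : ∀ x ∈ l, ∀ u ∈ m, ⁅x, u⁆ ∈ m)
    (ϖ : L →ₗ[K] Module.Dual K L →ₗ[K] L)
    (c : Module.Dual K L →ₗ[K] Module.Dual K L →ₗ[K] L)
    -- canonical compatibility of `G` with the reductive decomposition:
    (hϖl : ∀ z ∈ l, ϖ z = 0)
    (hϖm : ∀ (x : L), ∀ ξ ∈ m.dualAnnihilator, ∀ η ∈ m.dualAnnihilator, ξ (ϖ x η) = 0)
    -- `φ ∈ Alt(l⊗l⊗l ⊕ l⊗m⊗m ⊕ m⊗m⊗m)`: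
    (hAlt1 : ∀ ξ ∈ m.dualAnnihilator, ∀ η ∈ m.dualAnnihilator,
      ∀ ζ ∈ l.dualAnnihilator, ζ (c ξ η) = 0)
    (hAlt2 : ∀ ξ ∈ m.dualAnnihilator, ∀ η ∈ l.dualAnnihilator,
      ∀ ζ ∈ m.dualAnnihilator, ζ (c ξ η) = 0)
    (hAlt3 : ∀ ξ ∈ l.dualAnnihilator, ∀ η ∈ m.dualAnnihilator,
      ∀ ζ ∈ m.dualAnnihilator, ζ (c ξ η) = 0)
    -- `φ ≡ 0 mod l`:
    (hmod : ∀ ξ ∈ l.dualAnnihilator, ∀ η ∈ l.dualAnnihilator,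
      ∀ ζ ∈ l.dualAnnihilator, ζ (c ξ η) = 0)
    (p : Module.Dual K ↥l) :
    (∀ (n : ℕ), ∀ ξ ∈ m.dualAnnihilator,
        ((fun Y => brD ϖ c (0, p ∘ₗ Submodule.linearProjOfIsCompl l m hc) Y)^[2 * n]
            (0, ξ)).1 = 0
          ∧ ((fun Y => brD ϖ c (0, p ∘ₗ Submodule.linearProjOfIsCompl l m hc) Y)^[2 * n]
              (0, ξ)).2 ∈ m.dualAnnihilator)
      ∧ (∀ (n : ℕ), ∀ z ∈ l,
          ((fun Y => brD ϖ c (0, p ∘ₗ Submodule.linearProjOfIsCompl l m hc) Y)^[2 * n]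
              (z, 0)).1 ∈ l
            ∧ ((fun Y => brD ϖ c (0, p ∘ₗ Submodule.linearProjOfIsCompl l m hc) Y)^[2 * n]
                (z, 0)).2 = 0)
      ∧ (∀ (n : ℕ), ∀ ξ ∈ m.dualAnnihilator,
          ((fun Y => brD ϖ c (0, p ∘ₗ Submodule.linearProjOfIsCompl l m hc) Y)^[2 * n + 1]
              (0, ξ)).1 ∈ l
            ∧ ((fun Y => brD ϖ c (0, p ∘ₗ Submodule.linearProjOfIsCompl l m hc) Y)^[2 * n + 1]
                (0, ξ)).2 = 0)
      ∧ (∀ (n : ℕ), ∀ z ∈ l,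
          ((fun Y => brD ϖ c (0, p ∘ₗ Submodule.linearProjOfIsCompl l m hc) Y)^[2 * n + 1]
              (z, 0)).1 = 0
            ∧ ((fun Y => brD ϖ c (0, p ∘ₗ Submodule.linearProjOfIsCompl l m hc) Y)^[2 * n + 1]
                (z, 0)).2 ∈ m.dualAnnihilator)
      ∧ (∀ (n : ℕ), ∀ u ∈ m, ∀ ξ ∈ l.dualAnnihilator,
          ((fun Y => brD ϖ c (0, p ∘ₗ Submodule.linearProjOfIsCompl l m hc) Y)^[n]
              (u, ξ)).1 ∈ m
            ∧ ((fun Y => brD ϖ c (0, p ∘ₗ Submodule.linearProjOfIsCompl l m hc) Y)^[n]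
                (u, ξ)).2 ∈ l.dualAnnihilator) :=
  stmt_17_general l m hc hred ϖ c hϖl hϖm hAlt1 hAlt2 p

end
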